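/- arXiv:1504.07980 — 5 statements merged into one kernel-verified Lean document; each statement's English description precedes it below -/
import Mathlib

section
/- In any empty lattice triangle (a triangle with vertices in ℤ² containing no other integer points), the largest interior angle is at least π/2 and each of the other two angles is at most π/4. -/
open EuclideanGeometry Real

/-- The embedding of an integer point into the Euclidean plane. -/
noncomputable def latticePt (p : ℤ × ℤ) : EuclideanSpace ℝ (Fin 2) :=
  (WithLp.equiv 2 (Fin 2 → ℝ)).symm ![(p.1 : ℝ), (p.2 : ℝ)]

/-!
Write `u = b - a`, `v = c - a` and `D = u × v` for twice the signed area. If the triangle is empty,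
then `D = ±1`: say `D > 0`. Emptiness first forces `u` to be primitive (otherwise `u / gcd` is a
lattice point on the edge `ab`). Then a Bézout vector `z` with `u × z = 1`, shifted by a multiple
of `u` so that `0 ≤ z × v < D`, lies in the triangle `0, u, v` and is neither `0` nor `u`; so it
is `v`, and `D = u × v = 1`.

With `D² = 1` the integer dot products `d_a, d_b, d_c` at the three vertices satisfy
`d_a d_b + d_b d_c + d_c d_a = D² = 1`, so one of them is `≤ 0` and the largest angle is at least
`π / 2`. If `d_a ≤ 0`, then `d_b = |u|² - d_a ≥ 1`, and Lagrange's identity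
`|u|² |b - c|² = d_b² + D² ≤ 2 d_b²` gives `cos² B ≥ 1 / 2`, i.e. `B ≤ π / 4`; likewise for `C`.
-/

open scoped RealInnerProductSpace

lemma InnerProductGeometry.pi_div_two_le_angle_iff_inner_nonpos {V : Type*}
    [NormedAddCommGroup V] [InnerProductSpace ℝ V] (x y : V) :
    π / 2 ≤ InnerProductGeometry.angle x y ↔ ⟪x, y⟫ ≤ 0 := by
  rw [InnerProductGeometry.angle, ← not_lt, arccos_lt_pi_div_two, not_lt]
  rcases eq_or_ne x 0 with rfl | hx
  · simp
  rcases eq_or_ne y 0 with rfl | hy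
  · simp
  rw [div_le_iff₀ (by positivity), zero_mul]

namespace EuclideanSpace

lemma inner_sq_add_cross_sq_fin_two (x y : EuclideanSpace ℝ (Fin 2)) :
    ⟪x, y⟫ ^ 2 + (x 0 * y 1 - x 1 * y 0) ^ 2 = ‖x‖ ^ 2 * ‖y‖ ^ 2 := by
  simp only [EuclideanSpace.norm_sq_eq, PiLp.inner_apply, Fin.sum_univ_two, Real.norm_eq_abs,
    sq_abs, RCLike.inner_apply, conj_trivial]
  ring

lemma angle_le_pi_div_four_of_cross_sq_le_inner_sq {x y : EuclideanSpace ℝ (Fin 2)}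
    (hpos : 0 < ⟪x, y⟫) (h : (x 0 * y 1 - x 1 * y 0) ^ 2 ≤ ⟪x, y⟫ ^ 2) :
    InnerProductGeometry.angle x y ≤ π / 4 := by
  have hxy : 0 < ‖x‖ * ‖y‖ := hpos.trans_le (real_inner_le_norm x y)
  rw [InnerProductGeometry.angle, arccos_le_pi_div_four, le_div_iff₀ hxy,
    ← pow_le_pow_iff_left₀ (by positivity) hpos.le two_ne_zero, mul_pow, div_pow,
    sq_sqrt zero_le_two, mul_pow, ← inner_sq_add_cross_sq_fin_two]
  linarith

end EuclideanSpace

namespace LatticeTriangle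

def cross (u v : ℤ × ℤ) : ℤ := u.1 * v.2 - u.2 * v.1

def dot (u v : ℤ × ℤ) : ℤ := u.1 * v.1 + u.2 * v.2

lemma cross_comm (u v : ℤ × ℤ) : cross v u = -cross u v := by
  simp only [cross]; ring

lemma dot_comm (u v : ℤ × ℤ) : dot v u = dot u v := by
  simp only [dot]; ring

lemma dot_self_pos {u : ℤ × ℤ} (hu : u ≠ 0) : 0 < dot u u := by
  refine (add_nonneg (mul_self_nonneg _) (mul_self_nonneg _)).lt_of_ne (Ne.symm fun h => ?_)
  obtain ⟨h₁, h₂⟩ := mul_self_add_mul_self_eq_zero.mp h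
  exact hu (Prod.ext h₁ h₂)

lemma ne_zero_of_cross_ne_zero {u v : ℤ × ℤ} (h : cross u v ≠ 0) : u ≠ 0 := by
  rintro rfl; simp [cross] at h

/-- Cramer's rule. -/
lemma cross_smul_add_cross_smul (u v w : ℤ × ℤ) :
    cross w v • u + cross u w • v = cross u v • w := by
  ext <;> simp only [cross, Prod.fst_add, Prod.snd_add, Prod.smul_fst, Prod.smul_snd,
    smul_eq_mul] <;> ring

section Unimodular

/- By Cramer's rule, `w = (w × v / u × v) u + (u × w / u × v) v`, so for `u × v > 0` the
hypothesis `h` says that the only lattice points of the triangle `0, u, v` are its vertices. -/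
variable {u v : ℤ × ℤ} (hD : 0 < cross u v)
  (h : ∀ w, 0 ≤ cross w v → 0 ≤ cross u w → cross w v + cross u w ≤ cross u v →
    w = 0 ∨ w = u ∨ w = v)
include hD h

lemma gcd_eq_one_of_forall : Int.gcd u.1 u.2 = 1 := by
  have hg : 0 < Int.gcd u.1 u.2 := Int.gcd_pos_iff.2 (by
    by_contra! h0
    simp [cross, h0] at hD)
  set g := Int.gcd u.1 u.2
  set u' : ℤ × ℤ := (u.1 / g, u.2 / g)
  have hu : u = (g : ℤ) • u' := by
    ext
    · exact (Int.mul_ediv_cancel' (Int.gcd_dvd_left _ _)).symm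
    · exact (Int.mul_ediv_cancel' (Int.gcd_dvd_right _ _)).symm
  have hcross : cross u v = g * cross u' v := by
    rw [hu]; simp only [cross, Prod.smul_fst, Prod.smul_snd, smul_eq_mul]; ring
  have hcross' : cross u u' = 0 := by
    rw [hu]; simp only [cross, Prod.smul_fst, Prod.smul_snd, smul_eq_mul]; ring
  have hpos : 0 < cross u' v := pos_of_mul_pos_right (hcross ▸ hD) (Int.natCast_nonneg g)
  rcases h u' hpos.le hcross'.ge (by nlinarith) with h0 | h1 | h2
  · simp [h0, cross] at hpos
  · rw [← h1] at hcross
    exact_mod_cast (mul_eq_right₀ hpos.ne').mp hcross.symm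
  · simp [h2, cross, mul_comm] at hpos

theorem cross_eq_one_of_forall : cross u v = 1 := by
  have hgcd := Int.gcd_eq_gcd_ab u.1 u.2
  rw [gcd_eq_one_of_forall hD h] at hgcd
  set z : ℤ × ℤ := (-Int.gcdB u.1 u.2, Int.gcdA u.1 u.2)
  set w := z - (cross z v / cross u v) • u
  have hwu : cross u w = 1 := by
    simp only [w, z, cross, Prod.fst_sub, Prod.snd_sub, Prod.smul_fst, Prod.smul_snd,
      smul_eq_mul]
    linear_combination -hgcd
  have hwv : cross w v = cross z v % cross u v := by
    rw [Int.emod_def]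
    simp only [w, cross, Prod.fst_sub, Prod.snd_sub, Prod.smul_fst, Prod.smul_snd, smul_eq_mul]
    ring
  have h0 := Int.emod_nonneg (cross z v) hD.ne'
  have h1 := Int.emod_lt_of_pos (cross z v) hD
  rcases h w (by omega) (by omega) (by omega) with hw | hw | hw <;> rw [hw] at hwu
  · simp [cross] at hwu
  · simp [cross, mul_comm] at hwu
  · exact hwu

end Unimodular

@[simp] lemma latticePt_apply_zero (p : ℤ × ℤ) : latticePt p 0 = p.1 := rfl

@[simp] lemma latticePt_apply_one (p : ℤ × ℤ) : latticePt p 1 = p.2 := rfl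

lemma latticePt_add (p q : ℤ × ℤ) : latticePt (p + q) = latticePt p + latticePt q := by
  ext i; fin_cases i <;> simp

lemma latticePt_sub (p q : ℤ × ℤ) : latticePt (p - q) = latticePt p - latticePt q := by
  ext i; fin_cases i <;> simp

lemma latticePt_smul (k : ℤ) (p : ℤ × ℤ) : latticePt (k • p) = (k : ℝ) • latticePt p := by
  ext i; fin_cases i <;> simp

lemma inner_latticePt (u v : ℤ × ℤ) : ⟪latticePt u, latticePt v⟫ = dot u v := by
  simp only [PiLp.inner_apply, RCLike.inner_apply, conj_trivial, Fin.sum_univ_two,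
    latticePt_apply_zero, latticePt_apply_one, dot, Int.cast_add, Int.cast_mul]
  ring

lemma angle_latticePt (p q r : ℤ × ℤ) :
    ∠ (latticePt p) (latticePt q) (latticePt r) =
      InnerProductGeometry.angle (latticePt (p - q)) (latticePt (r - q)) := by
  rw [EuclideanGeometry.angle, latticePt_sub, latticePt_sub]; rfl

lemma latticePt_add_mem_convexHull {a b c w : ℤ × ℤ} (hD : 0 < cross (b - a) (c - a))
    (hs : 0 ≤ cross w (c - a)) (ht : 0 ≤ cross (b - a) w)
    (hst : cross w (c - a) + cross (b - a) w ≤ cross (b - a) (c - a)) :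
    latticePt (a + w) ∈ convexHull ℝ {latticePt a, latticePt b, latticePt c} := by
  have hD' : (0 : ℝ) < cross (b - a) (c - a) := by exact_mod_cast hD
  set σ : ℝ := cross w (c - a) / cross (b - a) (c - a)
  set τ : ℝ := cross (b - a) w / cross (b - a) (c - a)
  have hw : latticePt w = σ • (latticePt b - latticePt a) + τ • (latticePt c - latticePt a) := by
    have := congrArg latticePt (cross_smul_add_cross_smul (b - a) (c - a) w)
    simp only [latticePt_add, latticePt_smul, latticePt_sub] at this
    refine smul_right_injective _ hD'.ne' ?_
    simp only [← this, smul_add, smul_smul, σ, τ, mul_div_cancel₀ _ hD'.ne']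
  have hσ : 0 ≤ σ := div_nonneg (by exact_mod_cast hs) hD'.le
  have hτ : 0 ≤ τ := div_nonneg (by exact_mod_cast ht) hD'.le
  have hστ : σ + τ ≤ 1 := by
    rw [← add_div, div_le_one hD']; exact_mod_cast hst
  have hmem := (convex_convexHull ℝ {latticePt a, latticePt b, latticePt c}).sum_mem
    (t := Finset.univ) (w := ![1 - σ - τ, σ, τ]) (z := ![latticePt a, latticePt b, latticePt c])
    (by intro i _; fin_cases i <;>
      simp only [Fin.zero_eta, Fin.mk_one, Fin.reduceFinMk, Fin.isValue, Matrix.cons_val_zero,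
        Matrix.cons_val_one, Matrix.cons_val] <;> linarith) (by simp [Fin.sum_univ_three]; ring)
    (by intro i _; fin_cases i <;> apply subset_convexHull <;> simp)
  convert hmem using 1
  rw [latticePt_add, hw, Fin.sum_univ_three]
  simp only [Fin.isValue, Matrix.cons_val_zero, Matrix.cons_val_one, Matrix.cons_val]
  module

lemma pi_div_two_le_angle_latticePt_iff (p q r : ℤ × ℤ) :
    π / 2 ≤ ∠ (latticePt p) (latticePt q) (latticePt r) ↔ dot (p - q) (r - q) ≤ 0 := by
  rw [angle_latticePt, InnerProductGeometry.pi_div_two_le_angle_iff_inner_nonpos,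
    inner_latticePt, Int.cast_nonpos]

lemma angle_latticePt_le_pi_div_four {p q r : ℤ × ℤ} (hcross : cross (p - q) (r - q) ^ 2 = 1)
    (hdot : 0 < dot (p - q) (r - q)) :
    ∠ (latticePt p) (latticePt q) (latticePt r) ≤ π / 4 := by
  rw [angle_latticePt]
  apply EuclideanSpace.angle_le_pi_div_four_of_cross_sq_le_inner_sq <;>
    simp only [inner_latticePt, latticePt_apply_zero, latticePt_apply_one]
  · exact_mod_cast hdot
  · have hle : cross (p - q) (r - q) ^ 2 ≤ dot (p - q) (r - q) ^ 2 :=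
      hcross.trans_le (one_le_pow₀ hdot)
    simp only [cross] at hle
    exact_mod_cast hle

lemma dot_nonpos_or_of_cross_sq_eq_one {a b c : ℤ × ℤ} (hD : cross (b - a) (c - a) ^ 2 = 1) :
    dot (b - a) (c - a) ≤ 0 ∨ dot (a - b) (c - b) ≤ 0 ∨ dot (a - c) (b - c) ≤ 0 := by
  -- the integer form of `cot A cot B + cot B cot C + cot C cot A = 1`
  have key : dot (b - a) (c - a) * dot (a - b) (c - b) + dot (a - b) (c - b) * dot (a - c) (b - c)
      + dot (a - c) (b - c) * dot (b - a) (c - a) = cross (b - a) (c - a) ^ 2 := by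
    simp only [dot, cross, Prod.fst_sub, Prod.snd_sub]; ring
  by_contra! hpos
  obtain ⟨hA, hB, hC⟩ := hpos
  nlinarith [mul_pos hA hB, mul_pos hB hC, mul_pos hC hA]

lemma angle_latticePt_le_pi_div_four_of_dot_nonpos {a b c : ℤ × ℤ}
    (hD : cross (b - a) (c - a) ^ 2 = 1) (hA : dot (b - a) (c - a) ≤ 0) :
    ∠ (latticePt a) (latticePt b) (latticePt c) ≤ π / 4 := by
  have hu : 0 < dot (b - a) (b - a) :=
    dot_self_pos (ne_zero_of_cross_ne_zero (v := c - a) fun h0 => by simp [h0] at hD)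
  apply angle_latticePt_le_pi_div_four
  · rw [← hD]; simp only [cross, Prod.fst_sub, Prod.snd_sub]; ring
  · have : dot (a - b) (c - b) = dot (b - a) (b - a) - dot (b - a) (c - a) := by
      simp only [dot, Prod.fst_sub, Prod.snd_sub]; ring
    omega

end LatticeTriangle

open LatticeTriangle

def IsEmptyLatticeTriangle (a b c : ℤ × ℤ) : Prop :=
  ∀ p : ℤ × ℤ, latticePt p ∈ convexHull ℝ {latticePt a, latticePt b, latticePt c} →
    p = a ∨ p = b ∨ p = c

namespace IsEmptyLatticeTriangle

variable {a b c : ℤ × ℤ}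

lemma swap (h : IsEmptyLatticeTriangle a b c) : IsEmptyLatticeTriangle a c b := by
  intro p hp
  rw [Set.pair_comm] at hp
  rcases h p hp with h | h | h <;> simp [h]

lemma cross_eq_one (h : IsEmptyLatticeTriangle a b c) (hD : 0 < cross (b - a) (c - a)) :
    cross (b - a) (c - a) = 1 := by
  refine cross_eq_one_of_forall hD fun w hs ht hst => ?_
  rcases h _ (latticePt_add_mem_convexHull hD hs ht hst) with h | h | h
  · left; simpa using h
  · right; left; rw [← h]; abel
  · right; right; rw [← h]; abel

lemma cross_sq_eq_one (h : IsEmptyLatticeTriangle a b c) (hnd : cross (b - a) (c - a) ≠ 0) :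
    cross (b - a) (c - a) ^ 2 = 1 := by
  rcases hnd.lt_or_gt with hneg | hpos
  · rw [← neg_sq, ← cross_comm, h.swap.cross_eq_one (by rw [cross_comm]; omega), one_pow]
  · rw [h.cross_eq_one hpos, one_pow]

end IsEmptyLatticeTriangle

/-- In any empty lattice triangle (a nondegenerate triangle with vertices in `ℤ²`
containing no other integer points), the largest interior angle is at least `π/2`
and each of the other two angles is at most `π/4`.  Here we label the vertices so
that the angle at `a` is the largest one. -/
theorem empty_lattice_triangle_angles (a b c : ℤ × ℤ)
    (hnd : (b.1 - a.1) * (c.2 - a.2) - (b.2 - a.2) * (c.1 - a.1) ≠ 0)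
    (hempty : ∀ p : ℤ × ℤ,
      latticePt p ∈ convexHull ℝ ({latticePt a, latticePt b, latticePt c} :
        Set (EuclideanSpace ℝ (Fin 2))) → p = a ∨ p = b ∨ p = c)
    (hmax1 : ∠ (latticePt a) (latticePt b) (latticePt c)
      ≤ ∠ (latticePt b) (latticePt a) (latticePt c))
    (hmax2 : ∠ (latticePt a) (latticePt c) (latticePt b)
      ≤ ∠ (latticePt b) (latticePt a) (latticePt c)) :
    π / 2 ≤ ∠ (latticePt b) (latticePt a) (latticePt c) ∧
    ∠ (latticePt a) (latticePt b) (latticePt c) ≤ π / 4 ∧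
    ∠ (latticePt a) (latticePt c) (latticePt b) ≤ π / 4 := by
  have hD : cross (b - a) (c - a) ^ 2 = 1 := IsEmptyLatticeTriangle.cross_sq_eq_one hempty hnd
  have hA : π / 2 ≤ ∠ (latticePt b) (latticePt a) (latticePt c) := by
    rcases dot_nonpos_or_of_cross_sq_eq_one hD with h | h | h
    · exact (pi_div_two_le_angle_latticePt_iff b a c).2 h
    · exact ((pi_div_two_le_angle_latticePt_iff a b c).2 h).trans hmax1
    · exact ((pi_div_two_le_angle_latticePt_iff a c b).2 h).trans hmax2
  have hdot := (pi_div_two_le_angle_latticePt_iff b a c).1 hA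
  refine ⟨hA, angle_latticePt_le_pi_div_four_of_dot_nonpos hD hdot, ?_⟩
  refine angle_latticePt_le_pi_div_four_of_dot_nonpos ?_ (by rwa [dot_comm])
  rwa [cross_comm, neg_sq]
end

section
/- Let Δ and Δ' be two empty lattice triangles sharing a common edge e such that Δ ∪ Δ' is a strictly convex quadrilateral (necessarily a parallelogram). If e is the shorter diagonal of this parallelogram, then after replacing e by the other diagonal f, the two new triangles each have largest angle at least as large as the largest angles of Δ and Δ', and the non-largest angles of the new triangles are obtained by splitting non-largest angles of Δ and Δ'. -/
open EuclideanGeometry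

/-- The largest interior angle of the triangle with vertices `x, y, z`. -/
noncomputable def maxAngle (x y z : EuclideanSpace ℝ (Fin 2)) : ℝ :=
  max (∠ y x z) (max (∠ x y z) (∠ x z y))

/-!
Let `α = ∠ q p s` be the corner angle at `p`. In a parallelogram opposite corner angles
are equal, adjacent ones add up to `π`, and a diagonal splits the two corner angles at its
ends. The diagonal `pr` is the shorter one exactly when `⟪q - p, s - p⟫ ≤ 0`, i.e. when
`α ≥ π / 2`, so `α` is the largest corner angle. Every angle of the old triangles `pqr`, `psr` is either a
corner angle at `q` or `s`, equal to `π - α ≤ α`, or a part of the corner angle `α` at `p` or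
`r`; each new triangle `pqs`, `rqs` contains a full corner angle `α`.
-/

open InnerProductGeometry Real

theorem InnerProductGeometry.pi_div_two_le_angle_of_inner_nonpos {V : Type*}
    [NormedAddCommGroup V] [InnerProductSpace ℝ V] {x y : V} (h : inner ℝ x y ≤ 0) :
    π / 2 ≤ angle x y :=
  not_lt.mp fun hlt => (arccos_lt_pi_div_two.mp hlt).not_ge
    (div_nonpos_of_nonpos_of_nonneg h (by positivity))

def IsParallelogram {G P : Type*} [AddCommGroup G] [AddTorsor G P] (p q r s : P) : Prop :=
  q -ᵥ p = r -ᵥ s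

namespace IsParallelogram

section AddTorsor

variable {G P : Type*} [AddCommGroup G] [AddTorsor G P] {p q r s : P}

theorem rotate (h : IsParallelogram p q r s) : IsParallelogram q r s p :=
  sub_eq_zero.mp <| by rw [vsub_sub_vsub_comm, h, sub_self]

theorem symm (h : IsParallelogram p q r s) : IsParallelogram p s r q :=
  Eq.symm h.rotate

theorem eq_iff (h : IsParallelogram p q r s) : q = p ↔ r = s := by
  rw [← vsub_eq_zero_iff_eq, h, vsub_eq_zero_iff_eq]

theorem vsub_eq_add (h : IsParallelogram p q r s) : r -ᵥ p = (q -ᵥ p) + (s -ᵥ p) := by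
  rw [h, vsub_add_vsub_cancel]

end AddTorsor

variable {V P : Type*} [NormedAddCommGroup V] [InnerProductSpace ℝ V] [MetricSpace P]
  [NormedAddTorsor V P] {p q r s : P}

theorem angle_eq_angle_add_angle (h : IsParallelogram p q r s) (hsp : s ≠ p) :
    ∠ q p s = ∠ q p r + ∠ r p s := by
  simp only [EuclideanGeometry.angle, h.vsub_eq_add]
  rw [InnerProductGeometry.angle_comm (_ + _) (s -ᵥ p)]
  exact angle_eq_angle_add_add_angle_add _ (vsub_ne_zero.mpr hsp)

theorem angle_opposite_eq (h : IsParallelogram p q r s) : ∠ q r s = ∠ q p s := by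
  rw [EuclideanGeometry.angle, ← neg_vsub_eq_vsub_rev r q, ← neg_vsub_eq_vsub_rev r s, h.rotate,
    ← h, angle_neg_neg, InnerProductGeometry.angle_comm]
  rfl

theorem angle_adjacent_eq (h : IsParallelogram p q r s) : ∠ p q r = π - ∠ q p s := by
  rw [EuclideanGeometry.angle, ← neg_vsub_eq_vsub_rev q p, h.rotate, angle_neg_left]
  rfl

theorem pi_div_two_le_angle_of_dist_le (h : IsParallelogram p q r s) (hd : dist p r ≤ dist q s) :
    π / 2 ≤ ∠ q p s := by
  apply pi_div_two_le_angle_of_inner_nonpos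
  rw [dist_eq_norm_vsub' V, dist_eq_norm_vsub' V, h.vsub_eq_add,
    ← vsub_sub_vsub_cancel_right s q p] at hd
  have := pow_le_pow_left₀ (norm_nonneg _) hd 2
  rw [norm_add_sq_real, norm_sub_sq_real] at this
  linarith [real_inner_comm (q -ᵥ p) (s -ᵥ p)]

end IsParallelogram

section Plane

variable {p q r s : EuclideanSpace ℝ (Fin 2)}

theorem IsParallelogram.maxAngle_le_angle_of_dist_le (h : IsParallelogram p q r s)
    (hqp : q ≠ p) (hsp : s ≠ p) (hd : dist p r ≤ dist q s) :
    maxAngle p q r ≤ ∠ q p s := by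
  have hα := h.pi_div_two_le_angle_of_dist_le hd
  have split_p := h.angle_eq_angle_add_angle hsp
  have hsr : s ≠ r := Ne.symm (h.eq_iff.not.mp hqp)
  have split_r := h.symm.rotate.rotate.angle_eq_angle_add_angle hsr
  refine max_le ?_ (max_le ?_ ?_)
  · linarith [EuclideanGeometry.angle_nonneg r p s]
  · linarith [h.angle_adjacent_eq]
  · rw [EuclideanGeometry.angle_comm]
    linarith [EuclideanGeometry.angle_nonneg p r s, h.angle_opposite_eq]

theorem IsParallelogram.maxAngle_symm_le_angle_of_dist_le (h : IsParallelogram p q r s)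
    (hqp : q ≠ p) (hsp : s ≠ p) (hd : dist p r ≤ dist q s) :
    maxAngle p s r ≤ ∠ q p s := by
  rw [EuclideanGeometry.angle_comm]
  exact h.symm.maxAngle_le_angle_of_dist_le hsp hqp (by rwa [dist_comm s])

end Plane

theorem latticePt_sub (a b : ℤ × ℤ) : latticePt a - latticePt b = latticePt (a - b) := by
  ext i
  fin_cases i <;> simp [latticePt]

theorem latticePt_injective : Function.Injective latticePt := by
  intro a b h
  have h0 := congrArg (· 0) h
  have h1 := congrArg (· 1) h
  simp [latticePt] at h0 h1
  exact Prod.ext h0 h1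

theorem isParallelogram_latticePt {p q r s : ℤ × ℤ} (h : p + r = q + s) :
    IsParallelogram (latticePt p) (latticePt q) (latticePt r) (latticePt s) := by
  rw [IsParallelogram, vsub_eq_sub, vsub_eq_sub, latticePt_sub, latticePt_sub,
    sub_eq_sub_iff_add_eq_add.mpr (by rw [← h, add_comm])]

theorem flip_increases_max_angle_general (p q r s : ℤ × ℤ)
    (hpar : p + r = q + s)
    (hnd1 : (q.1 - p.1) * (r.2 - p.2) - (q.2 - p.2) * (r.1 - p.1) ≠ 0)
    (hshort : dist (latticePt p) (latticePt r) ≤ dist (latticePt q) (latticePt s)) :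
    -- the corner angles of the parallelogram are split by the diagonals:
    (∠ (latticePt q) (latticePt p) (latticePt s)
        = ∠ (latticePt q) (latticePt p) (latticePt r)
          + ∠ (latticePt r) (latticePt p) (latticePt s) ∧
     ∠ (latticePt q) (latticePt r) (latticePt s)
        = ∠ (latticePt q) (latticePt r) (latticePt p)
          + ∠ (latticePt p) (latticePt r) (latticePt s) ∧
     ∠ (latticePt p) (latticePt q) (latticePt r)
        = ∠ (latticePt p) (latticePt q) (latticePt s)
          + ∠ (latticePt s) (latticePt q) (latticePt r) ∧
     ∠ (latticePt p) (latticePt s) (latticePt r)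
        = ∠ (latticePt p) (latticePt s) (latticePt q)
          + ∠ (latticePt q) (latticePt s) (latticePt r)) ∧
    -- each new triangle has largest angle at least the largest angles of Δ and Δ':
    (maxAngle (latticePt p) (latticePt q) (latticePt s)
        ≥ maxAngle (latticePt p) (latticePt q) (latticePt r) ∧
     maxAngle (latticePt p) (latticePt q) (latticePt s)
        ≥ maxAngle (latticePt p) (latticePt s) (latticePt r) ∧
     maxAngle (latticePt r) (latticePt q) (latticePt s)
        ≥ maxAngle (latticePt p) (latticePt q) (latticePt r) ∧
     maxAngle (latticePt r) (latticePt q) (latticePt s)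
        ≥ maxAngle (latticePt p) (latticePt s) (latticePt r)) := by
  have h := isParallelogram_latticePt hpar
  have hqp : latticePt q ≠ latticePt p := latticePt_injective.ne <| by
    rintro rfl
    simp at hnd1
  have hsp : latticePt s ≠ latticePt p := latticePt_injective.ne <| by
    rintro rfl
    obtain rfl : r = q := add_right_cancel (by rwa [add_comm] at hpar)
    exact hnd1 (by ring)
  have hrs : latticePt r ≠ latticePt s := h.eq_iff.not.mp hqp
  have hrq : latticePt r ≠ latticePt q := h.rotate.eq_iff.not.mpr hsp
  have hnew₁ : ∠ (latticePt q) (latticePt p) (latticePt s)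
      ≤ maxAngle (latticePt p) (latticePt q) (latticePt s) := le_max_left _ _
  have hnew₂ : ∠ (latticePt q) (latticePt p) (latticePt s)
      ≤ maxAngle (latticePt r) (latticePt q) (latticePt s) :=
    h.angle_opposite_eq ▸ le_max_left _ _
  have hold₁ := h.maxAngle_le_angle_of_dist_le hqp hsp hshort
  have hold₂ := h.maxAngle_symm_le_angle_of_dist_le hqp hsp hshort
  exact ⟨⟨h.angle_eq_angle_add_angle hsp,
      h.symm.rotate.rotate.angle_eq_angle_add_angle hrs.symm,
      h.rotate.symm.angle_eq_angle_add_angle hrq,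
      h.rotate.rotate.rotate.angle_eq_angle_add_angle hrs⟩,
    hold₁.trans hnew₁, hold₂.trans hnew₁, hold₁.trans hnew₂, hold₂.trans hnew₂⟩

/-- Flipping the shorter diagonal of a parallelogram formed by two empty lattice
triangles: let `Δ = (p,q,r)` and `Δ' = (p,s,r)` be empty lattice triangles sharing
the edge `e = pr`, whose union is the parallelogram `p q r s` (so `p + r = q + s`),
and suppose `e = pr` is the shorter diagonal.  Then after replacing `e` by the other
diagonal `f = qs`, the two new triangles `(p,q,s)` and `(r,q,s)` each have largest
angle at least as large as the largest angles of `Δ` and `Δ'`, and the angles of the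
old and new triangles at the four corners of the parallelogram are obtained by
splitting the corner angles by the respective diagonals. -/
theorem flip_increases_max_angle (p q r s : ℤ × ℤ)
    (hpar : p + r = q + s)
    (hnd1 : (q.1 - p.1) * (r.2 - p.2) - (q.2 - p.2) * (r.1 - p.1) ≠ 0)
    (hempty1 : ∀ x : ℤ × ℤ,
      latticePt x ∈ convexHull ℝ ({latticePt p, latticePt q, latticePt r} :
        Set (EuclideanSpace ℝ (Fin 2))) → x = p ∨ x = q ∨ x = r)
    (hempty2 : ∀ x : ℤ × ℤ,
      latticePt x ∈ convexHull ℝ ({latticePt p, latticePt s, latticePt r} :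
        Set (EuclideanSpace ℝ (Fin 2))) → x = p ∨ x = s ∨ x = r)
    (hshort : dist (latticePt p) (latticePt r) ≤ dist (latticePt q) (latticePt s)) :
    -- the corner angles of the parallelogram are split by the diagonals:
    (∠ (latticePt q) (latticePt p) (latticePt s)
        = ∠ (latticePt q) (latticePt p) (latticePt r)
          + ∠ (latticePt r) (latticePt p) (latticePt s) ∧
     ∠ (latticePt q) (latticePt r) (latticePt s)
        = ∠ (latticePt q) (latticePt r) (latticePt p)
          + ∠ (latticePt p) (latticePt r) (latticePt s) ∧
     ∠ (latticePt p) (latticePt q) (latticePt r)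
        = ∠ (latticePt p) (latticePt q) (latticePt s)
          + ∠ (latticePt s) (latticePt q) (latticePt r) ∧
     ∠ (latticePt p) (latticePt s) (latticePt r)
        = ∠ (latticePt p) (latticePt s) (latticePt q)
          + ∠ (latticePt q) (latticePt s) (latticePt r)) ∧
    -- each new triangle has largest angle at least the largest angles of Δ and Δ':
    (maxAngle (latticePt p) (latticePt q) (latticePt s)
        ≥ maxAngle (latticePt p) (latticePt q) (latticePt r) ∧
     maxAngle (latticePt p) (latticePt q) (latticePt s)
        ≥ maxAngle (latticePt p) (latticePt s) (latticePt r) ∧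
     maxAngle (latticePt r) (latticePt q) (latticePt s)
        ≥ maxAngle (latticePt p) (latticePt q) (latticePt r) ∧
     maxAngle (latticePt r) (latticePt q) (latticePt s)
        ≥ maxAngle (latticePt p) (latticePt s) (latticePt r)) :=
  flip_increases_max_angle_general p q r s hpar hnd1 hshort
end

section
/- Let T = (a, b, c) be an empty lattice triangle in which the edge ab is the longest edge (in ℓ₁ norm), and suppose the other two edges bc, ca have ℓ₁ lengths ℓ₂ and ℓ₃ with ℓ₂, ℓ₃ < ℓ₁ where ℓ₁ = |ab|₁. Then ℓ₁ = ℓ₂ + ℓ₃; that is, the ℓ₁ length of the longest edge of an empty lattice triangle whose other two edges are strictly shorter equals the sum of the ℓ₁ lengths of the other two edges. -/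
def l1 (v : ℤ × ℤ) : ℤ := |v.1| + |v.2|

def cross (u v : ℤ × ℤ) : ℤ := u.1 * v.2 - u.2 * v.1

lemma cross_smul_left (n : ℤ) (x y : ℤ × ℤ) : cross (n • x) y = n * cross x y := by
  simp only [cross, Prod.smul_fst, Prod.smul_snd, smul_eq_mul]; ring

lemma cross_smul_eq (u v x : ℤ × ℤ) : cross u v • x = cross x v • u + cross u x • v := by
  ext <;> simp only [cross, Prod.smul_fst, Prod.smul_snd, Prod.fst_add, Prod.snd_add, smul_eq_mul]
    <;> ring

lemma l1_neg (v : ℤ × ℤ) : l1 (-v) = l1 v := by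
  simp only [l1, Prod.fst_neg, Prod.snd_neg, abs_neg]

lemma nonneg_of_abs_det_le_one {v₁ v₂ w₁ w₂ : ℤ} (hdet : |v₁ * w₂ - v₂ * w₁| ≤ 1)
    (hv : 0 < v₁ + v₂) (hw : 0 < w₁ + w₂) (h₁ : 0 ≤ v₁ + w₁) : 0 ≤ v₁ := by
  by_contra! hv₁
  have hdet' := neg_abs_le (v₁ * w₂ - v₂ * w₁)
  rcases le_or_gt 0 w₂ with hw₂ | hw₂
  · nlinarith [mul_nonpos_of_nonpos_of_nonneg hv₁.le hw₂,
      mul_le_mul (show 2 ≤ v₂ by omega) (show 1 ≤ w₁ by omega) zero_le_one (by omega)]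
  · nlinarith [mul_le_mul (show 1 - v₁ ≤ v₂ by omega) (show 1 - w₂ ≤ w₁ by omega) (by omega)
      (by omega)]

lemma l1_add_eq_of_abs_cross_le_one {v w : ℤ × ℤ} (hvw : |cross v w| ≤ 1)
    (hv : l1 v < l1 (v + w)) (hw : l1 w < l1 (v + w)) : l1 (v + w) = l1 v + l1 w := by
  obtain ⟨v₁, v₂⟩ := v
  obtain ⟨w₁, w₂⟩ := w
  simp only [l1, cross, Prod.mk_add_mk] at *
  wlog h₁ : 0 ≤ v₁ + w₁ generalizing v₁ w₁
  · have := this (-v₁) (-w₁)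
      (by rwa [show -v₁ * w₂ - v₂ * -w₁ = -(v₁ * w₂ - v₂ * w₁) by ring, abs_neg])
      (by simpa only [← neg_add, abs_neg]) (by simpa only [← neg_add, abs_neg]) (by omega)
    simpa only [← neg_add, abs_neg] using this
  wlog h₂ : 0 ≤ v₂ + w₂ generalizing v₂ w₂
  · have := this (-v₂) (-w₂)
      (by rwa [show v₁ * -w₂ - -v₂ * w₁ = -(v₁ * w₂ - v₂ * w₁) by ring, abs_neg])
      (by simpa only [← neg_add, abs_neg]) (by simpa only [← neg_add, abs_neg]) (by omega)
    simpa only [← neg_add, abs_neg] using this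
  rw [abs_of_nonneg h₁, abs_of_nonneg h₂] at *
  have hv' : 0 < v₁ + v₂ := by linarith [le_abs_self w₁, le_abs_self w₂]
  have hw' : 0 < w₁ + w₂ := by linarith [le_abs_self v₁, le_abs_self v₂]
  have hvw' : |v₂ * w₁ - v₁ * w₂| ≤ 1 := by rwa [← abs_neg, neg_sub]
  have hwv : |w₁ * v₂ - w₂ * v₁| ≤ 1 := by rwa [← abs_neg, neg_sub, mul_comm w₁, mul_comm w₂]
  have hwv' : |w₂ * v₁ - w₁ * v₂| ≤ 1 := by rwa [mul_comm w₁, mul_comm w₂]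
  rw [abs_of_nonneg (nonneg_of_abs_det_le_one hvw hv' hw' h₁),
    abs_of_nonneg (nonneg_of_abs_det_le_one hvw' (by linarith) (by linarith) h₂),
    abs_of_nonneg (nonneg_of_abs_det_le_one hwv hw' hv' (by linarith)),
    abs_of_nonneg (nonneg_of_abs_det_le_one hwv' (by linarith) (by linarith) (by linarith))]
  ring

/-- `x` lies in the closed triangle `0 u v`; its barycentric coordinates are `S / N` and `T / N`. -/
def MemTriangle (u v x : ℤ × ℤ) : Prop :=
  ∃ N S T : ℤ, 0 < N ∧ 0 ≤ S ∧ 0 ≤ T ∧ S + T ≤ N ∧ N • x = S • u + T • v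

lemma memTriangle_of_cross {u v x : ℤ × ℤ} (huv : 0 < cross u v) (hx : 0 ≤ cross x v)
    (hu : 0 ≤ cross u x) (h : cross x v + cross u x ≤ cross u v) : MemTriangle u v x :=
  ⟨_, _, _, huv, hx, hu, h, cross_smul_eq u v x⟩

lemma exists_cross_eq_one {u : ℤ × ℤ} (hu : IsCoprime u.1 u.2) : ∃ w, cross u w = 1 := by
  obtain ⟨m, n, h⟩ := hu
  exact ⟨(-n, m), by simp only [cross]; linear_combination h⟩

lemma exists_eq_smul_of_not_isCoprime {u : ℤ × ℤ} (hu : u ≠ 0) (h : ¬IsCoprime u.1 u.2) :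
    ∃ (g : ℤ) (x : ℤ × ℤ), 2 ≤ g ∧ u = g • x := by
  have hg : 0 < Int.gcd u.1 u.2 := Nat.pos_of_ne_zero fun h0 =>
    hu (Prod.ext (Int.gcd_eq_zero_iff.1 h0).1 (Int.gcd_eq_zero_iff.1 h0).2)
  obtain ⟨k₁, k₂, -, h₁, h₂⟩ := Int.exists_gcd_one hg
  have hg1 : Int.gcd u.1 u.2 ≠ 1 := fun h1 => h (Int.isCoprime_iff_gcd_eq_one.2 h1)
  exact ⟨Int.gcd u.1 u.2, (k₁, k₂), by omega,
    Prod.ext (h₁.trans (mul_comm _ _)) (h₂.trans (mul_comm _ _))⟩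

lemma exists_memTriangle_of_two_le_cross {u v : ℤ × ℤ} (h : 2 ≤ cross u v) :
    ∃ x, x ≠ 0 ∧ x ≠ u ∧ x ≠ v ∧ MemTriangle u v x := by
  by_cases hu : IsCoprime u.1 u.2
  · obtain ⟨w, hw⟩ := exists_cross_eq_one hu
    set D := cross u v
    -- shifting `w` along `u` changes `cross · v` by multiples of `D` and keeps `cross u ·`
    set x := w - (cross w v / D) • u
    have hxu : cross u x = 1 := by
      simp only [x, cross, Prod.fst_sub, Prod.snd_sub, Prod.smul_fst, Prod.smul_snd,
        smul_eq_mul] at hw ⊢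
      linear_combination hw
    have hxv : cross x v = cross w v % D := by
      rw [Int.emod_def]
      simp only [x, D, cross, Prod.fst_sub, Prod.snd_sub, Prod.smul_fst, Prod.smul_snd,
        smul_eq_mul]
      ring
    refine ⟨x, ?_, ?_, ?_, memTriangle_of_cross (by omega) ?_ (by omega) ?_⟩
    · intro hx; simp [hx, cross] at hxu
    · intro hx; simp [hx, cross, mul_comm] at hxu
    · intro hx; rw [hx] at hxu; omega
    · rw [hxv]; exact Int.emod_nonneg _ (by omega)
    · rw [hxv, hxu]; linarith [Int.emod_lt_of_pos (cross w v) (show 0 < D by omega)]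
  · have hu0 : u ≠ 0 := by rintro rfl; simp [cross] at h
    obtain ⟨g, x, hg, rfl⟩ := exists_eq_smul_of_not_isCoprime hu0 hu
    rw [cross_smul_left] at h
    refine ⟨x, ?_, ?_, ?_, g, 1, 0, by omega, zero_le_one, le_rfl, by omega, by simp⟩
    · rintro rfl; simp [cross] at h
    · intro hx
      have : cross x v = g * cross x v := by rw [← cross_smul_left, ← hx]
      nlinarith
    · rintro rfl; simp [cross, mul_comm] at h

lemma latticePt_mem_convexHull_of_memTriangle {a b c p : ℤ × ℤ}
    (h : MemTriangle (b - a) (c - a) (p - a)) :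
    latticePt p ∈ convexHull ℝ {latticePt a, latticePt b, latticePt c} := by
  obtain ⟨N, S, T, hN, hS, hT, hST, h⟩ := h
  obtain ⟨h₁, h₂⟩ := Prod.ext_iff.1 h
  simp only [Prod.smul_fst, Prod.smul_snd, Prod.fst_add, Prod.snd_add, Prod.fst_sub,
    Prod.snd_sub, smul_eq_mul] at h₁ h₂
  rify at hN hS hT hST h₁ h₂
  refine mem_convexHull_of_exists_fintype ![(N - S - T) / N, S / N, T / N]
    ![latticePt a, latticePt b, latticePt c] ?_ ?_ ?_ ?_
  · intro i
    fin_cases i <;> simp only [Fin.zero_eta, Fin.mk_one, Fin.reduceFinMk, Matrix.cons_val] <;>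
      apply div_nonneg _ hN.le <;> linarith
  · simp only [Fin.sum_univ_three, Matrix.cons_val]
    field_simp
    ring
  · intro i; fin_cases i <;> simp
  · ext i
    fin_cases i <;>
      simp only [latticePt, WithLp.equiv_symm_apply, Fin.sum_univ_three, Fin.isValue,
        Matrix.cons_val_zero, Matrix.cons_val_one, Matrix.cons_val, Fin.zero_eta, Fin.mk_one,
        Matrix.cons_val_fin_one, PiLp.add_apply, PiLp.smul_apply, smul_eq_mul] <;>
      field_simp
    · linear_combination -h₁
    · linear_combination -h₂

lemma abs_cross_le_one_of_empty {a b c : ℤ × ℤ}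
    (hempty : ∀ p : ℤ × ℤ, latticePt p ∈ convexHull ℝ
      ({latticePt a, latticePt b, latticePt c} : Set (EuclideanSpace ℝ (Fin 2))) →
        p = a ∨ p = b ∨ p = c) :
    |cross (b - a) (c - a)| ≤ 1 := by
  wlog h : 0 ≤ cross (b - a) (c - a) generalizing b c
  · have hcb : cross (c - a) (b - a) = -cross (b - a) (c - a) := by simp only [cross]; ring
    rw [← abs_neg, ← hcb]
    refine this (fun p hp => ?_) (by omega)
    rw [Set.pair_comm] at hp
    rcases hempty p hp with h | h | h <;> simp [h]
  by_contra! hlt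
  rw [abs_of_nonneg h] at hlt
  obtain ⟨x, hx0, hxb, hxc, hx⟩ := exists_memTriangle_of_two_le_cross hlt
  have hmem : latticePt (x + a) ∈ convexHull ℝ {latticePt a, latticePt b, latticePt c} :=
    latticePt_mem_convexHull_of_memTriangle (by rwa [add_sub_cancel_right])
  rcases hempty _ hmem with h | h | h
  · exact hx0 (add_eq_right.1 h)
  · exact hxb (eq_sub_of_add_eq h)
  · exact hxc (eq_sub_of_add_eq h)

theorem empty_lattice_triangle_l1_additive_general (a b c : ℤ × ℤ)
    (hempty : ∀ p : ℤ × ℤ,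
      latticePt p ∈ convexHull ℝ ({latticePt a, latticePt b, latticePt c} :
        Set (EuclideanSpace ℝ (Fin 2))) → p = a ∨ p = b ∨ p = c)
    (h2 : l1 (c - b) < l1 (b - a))
    (h3 : l1 (a - c) < l1 (b - a)) :
    l1 (b - a) = l1 (c - b) + l1 (a - c) := by
  have hsum : c - b + (a - c) = -(b - a) := by abel
  have hcross : cross (c - b) (a - c) = cross (b - a) (c - a) := by
    simp only [cross, Prod.fst_sub, Prod.snd_sub]; ring
  have key := l1_add_eq_of_abs_cross_le_one (hcross ▸ abs_cross_le_one_of_empty hempty)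
    (by rwa [hsum, l1_neg]) (by rwa [hsum, l1_neg])
  rwa [hsum, l1_neg] at key

/-- In an empty lattice triangle `(a,b,c)` in which the edge `ab` is strictly the
longest in `ℓ₁` norm, the `ℓ₁` length of `ab` equals the sum of the `ℓ₁` lengths
of the other two edges. -/
theorem empty_lattice_triangle_l1_additive (a b c : ℤ × ℤ)
    (hnd : (b.1 - a.1) * (c.2 - a.2) - (b.2 - a.2) * (c.1 - a.1) ≠ 0)
    (hempty : ∀ p : ℤ × ℤ,
      latticePt p ∈ convexHull ℝ ({latticePt a, latticePt b, latticePt c} :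
        Set (EuclideanSpace ℝ (Fin 2))) → p = a ∨ p = b ∨ p = c)
    (h2 : l1 (c - b) < l1 (b - a))
    (h3 : l1 (a - c) < l1 (b - a)) :
    l1 (b - a) = l1 (c - b) + l1 (a - c) :=
  empty_lattice_triangle_l1_additive_general a b c hempty h2 h3
end

section
/- Let e be an edge of a lattice triangulation that is flippable, i.e., the two empty lattice triangles containing e form a parallelogram with e as a diagonal. Let f be the other diagonal, and let ψ be the ℓ₁ length of the shortest among the four sides of the parallelogram. Then | |f|₁ − |e|₁ | = 2ψ whenever e is not a unit diagonal; more precisely, if e is the longer diagonal then |e|₁ = |f|₁ + 2ψ, and if e is the shorter diagonal then |f|₁ = |e|₁ + 2ψ. -/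
/-!
An empty lattice triangle `pqr` is unimodular. For `D = det (q - p) (r - p) > 0`, reducing modulo
`D` the Cramer coefficients of a unit vector gives a lattice point in the half-open parallelogram
spanned by the triangle; after a reflection through the midpoint of `qr` if necessary it lies in
the triangle, so it is a vertex and the coefficients vanish modulo `D`. Thus `D` divides every
coordinate of `q - p` and `r - p`, whence `D * D ∣ D`. So the sides `a = q - p`, `b = r - q`
satisfy `|det a b| = 1`, and the diagonals are `a + b` and `b - a`.

Coordinatewise `|x + y| - |x - y| = ±2 min |x| |y|`, with the sign of `x * y`. If the sign is the
same in both coordinates, unimodularity makes `(|a₁|, |a₂|)` and `(|b₁|, |b₂|)` comparable unless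
the parallelogram is a unit square, so the two minima add up to `min (l1 a) (l1 b)`. If the signs
differ, unimodularity forces `|a₁ * b₂| + |a₂ * b₁| = 1`, which leaves only a few shapes to check.
-/

def det (a b : ℤ × ℤ) : ℤ := a.1 * b.2 - a.2 * b.1

lemma det_self (a : ℤ × ℤ) : det a a = 0 := by
  rw [det, mul_comm, sub_self]

lemma det_comm (a b : ℤ × ℤ) : det b a = -det a b := by
  simp only [det]; ring

lemma det_neg_right (a b : ℤ × ℤ) : det a (-b) = -det a b := by
  simp only [det, Prod.fst_neg, Prod.snd_neg]; ring

lemma eq_det_of_smul_eq {a b x : ℤ × ℤ} {t u : ℤ} (hD : det a b ≠ 0)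
    (hx : det a b • x = t • a + u • b) : t = det x b ∧ u = det a x := by
  obtain ⟨hx₁, hx₂⟩ := Prod.ext_iff.mp hx
  simp only [Prod.smul_fst, Prod.smul_snd, Prod.fst_add, Prod.snd_add, smul_eq_mul] at hx₁ hx₂
  constructor <;> apply mul_left_cancel₀ hD <;> simp only [det] at hx₁ hx₂ ⊢
  · linear_combination b.1 * hx₂ - b.2 * hx₁
  · linear_combination a.2 * hx₁ - a.1 * hx₂

lemma abs_add_sub_abs_sub_of_mul_nonneg {u v : ℤ} (h : 0 ≤ u * v) :
    |u + v| - |u - v| = 2 * min |u| |v| := by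
  rcases Int.mul_nonneg_iff.mp h with h | h <;> simp only [abs_eq_max_neg] <;> omega

lemma abs_add_sub_abs_sub_of_mul_nonpos {u v : ℤ} (h : u * v ≤ 0) :
    |u + v| - |u - v| = -(2 * min |u| |v|) := by
  rcases Int.mul_nonpos_iff.mp h with h | h <;> simp only [abs_eq_max_neg] <;> omega

lemma abs_sub_eq_abs_sub_abs_of_mul_nonneg {u v : ℤ} (h : 0 ≤ u * v) :
    |u - v| = |(|u| - |v|)| := by
  rcases Int.mul_nonneg_iff.mp h with h | h <;> simp only [abs_eq_max_neg] <;> omega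

lemma abs_sub_eq_abs_add_abs_of_mul_nonpos {u v : ℤ} (h : u * v ≤ 0) :
    |u - v| = |u| + |v| := by
  rcases Int.mul_nonpos_iff.mp h with h | h <;> simp only [abs_eq_max_neg] <;> omega

lemma eq_of_lt_of_lt_of_abs_mul_sub_mul_eq_one {x₁ x₂ y₁ y₂ : ℤ} (hx₁ : 0 ≤ x₁) (hy₂ : 0 ≤ y₂)
    (h₁ : x₁ < y₁) (h₂ : y₂ < x₂) (h : |x₁ * y₂ - x₂ * y₁| = 1) :
    x₁ = 0 ∧ y₂ = 0 ∧ x₂ = 1 ∧ y₁ = 1 := by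
  have hprod : (x₁ + 1) * (y₂ + 1) ≤ y₁ * x₂ := mul_le_mul h₁ h₂ (by omega) (by omega)
  have hdet : x₁ * y₂ - x₂ * y₁ = -1 := by
    rcases abs_eq (zero_le_one' ℤ) |>.mp h with h | h <;> nlinarith
  have hx₁ : x₁ = 0 := by nlinarith
  have hy₂ : y₂ = 0 := by nlinarith
  subst hx₁ hy₂
  have hxy : x₂ * y₁ = 1 := by linarith
  exact ⟨rfl, rfl, Int.eq_one_of_mul_eq_one_right (by omega) hxy,
    Int.eq_one_of_mul_eq_one_left (by omega) hxy⟩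

lemma min_add_min_of_abs_mul_sub_mul_eq_one {x₁ x₂ y₁ y₂ : ℤ} (hx₁ : 0 ≤ x₁) (hx₂ : 0 ≤ x₂)
    (hy₁ : 0 ≤ y₁) (hy₂ : 0 ≤ y₂) (h : |x₁ * y₂ - x₂ * y₁| = 1)
    (hunit : ¬(x₁ + x₂ = 1 ∧ y₁ + y₂ = 1)) :
    min x₁ y₁ + min x₂ y₂ = min (x₁ + x₂) (y₁ + y₂) := by
  have hxy := fun (h₁ : x₁ < y₁) (h₂ : y₂ < x₂) =>
    eq_of_lt_of_lt_of_abs_mul_sub_mul_eq_one hx₁ hy₂ h₁ h₂ h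
  have hyx := fun (h₁ : y₁ < x₁) (h₂ : x₂ < y₂) =>
    eq_of_lt_of_lt_of_abs_mul_sub_mul_eq_one hy₁ hx₂ h₁ h₂
      (by rwa [abs_sub_comm, mul_comm y₁, mul_comm y₂])
  simp only [imp_iff_not_or] at hxy hyx
  omega

lemma eq_one_of_mul_add_mul_eq_one {x₁ x₂ y₁ y₂ : ℤ} (hx₁ : 0 ≤ x₁) (hx₂ : 0 ≤ x₂)
    (hy₁ : 0 ≤ y₁) (hy₂ : 0 ≤ y₂) (h : x₁ * y₂ + x₂ * y₁ = 1) :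
    ((x₁ = 0 ∨ y₂ = 0) ∧ x₂ = 1 ∧ y₁ = 1) ∨ ((x₂ = 0 ∨ y₁ = 0) ∧ x₁ = 1 ∧ y₂ = 1) := by
  have h₁ := mul_nonneg hx₁ hy₂
  have h₂ := mul_nonneg hx₂ hy₁
  rcases (show x₁ * y₂ = 0 ∧ x₂ * y₁ = 1 ∨ x₂ * y₁ = 0 ∧ x₁ * y₂ = 1 by omega) with
    ⟨h0, h1⟩ | ⟨h0, h1⟩
  · exact .inl ⟨mul_eq_zero.mp h0, Int.eq_one_of_mul_eq_one_right hx₂ h1,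
      Int.eq_one_of_mul_eq_one_left hy₁ h1⟩
  · exact .inr ⟨mul_eq_zero.mp h0, Int.eq_one_of_mul_eq_one_right hx₁ h1,
      Int.eq_one_of_mul_eq_one_left hy₂ h1⟩

lemma abs_min_sub_min_of_mul_add_mul_eq_one {x₁ x₂ y₁ y₂ : ℤ} (hx₁ : 0 ≤ x₁) (hx₂ : 0 ≤ x₂)
    (hy₁ : 0 ≤ y₁) (hy₂ : 0 ≤ y₂) (h : x₁ * y₂ + x₂ * y₁ = 1)
    (hunit : ¬(x₁ + x₂ = 1 ∧ y₁ + y₂ = 1)) :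
    |min x₁ y₁ - min x₂ y₂| = min (x₁ + x₂) (y₁ + y₂) := by
  rw [abs_eq_max_neg]
  rcases eq_one_of_mul_add_mul_eq_one hx₁ hx₂ hy₁ hy₂ h with ⟨_, rfl, rfl⟩ | ⟨_, rfl, rfl⟩ <;>
    omega

lemma abs_l1_add_sub_l1_sub_of_mul_nonneg {a b : ℤ × ℤ} (h₁ : 0 ≤ a.1 * b.1)
    (hdet : |det a b| = 1) (hunit : ¬(l1 a = 1 ∧ l1 b = 1)) :
    |l1 (a + b) - l1 (a - b)| = 2 * min (l1 a) (l1 b) := by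
  obtain ⟨a₁, a₂⟩ := a
  obtain ⟨b₁, b₂⟩ := b
  simp only [det, l1, Prod.mk_add_mk, Prod.mk_sub_mk] at h₁ hdet hunit ⊢
  rw [add_sub_add_comm, abs_add_sub_abs_sub_of_mul_nonneg h₁]
  have hprod : a₁ * b₂ * (a₂ * b₁) = a₁ * b₁ * (a₂ * b₂) := by ring
  rcases le_total 0 (a₂ * b₂) with h₂ | h₂
  · rw [abs_sub_eq_abs_sub_abs_of_mul_nonneg (hprod ▸ mul_nonneg h₁ h₂), abs_mul, abs_mul] at hdet
    rw [abs_add_sub_abs_sub_of_mul_nonneg h₂, ← mul_add, min_add_min_of_abs_mul_sub_mul_eq_one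
      (abs_nonneg a₁) (abs_nonneg a₂) (abs_nonneg b₁) (abs_nonneg b₂) hdet hunit,
      abs_of_nonneg (by positivity)]
  · rw [abs_sub_eq_abs_add_abs_of_mul_nonpos (hprod ▸ mul_nonpos_of_nonneg_of_nonpos h₁ h₂),
      abs_mul, abs_mul] at hdet
    rw [abs_add_sub_abs_sub_of_mul_nonpos h₂, ← sub_eq_add_neg, ← mul_sub, abs_mul, abs_two,
      abs_min_sub_min_of_mul_add_mul_eq_one (abs_nonneg a₁) (abs_nonneg a₂) (abs_nonneg b₁)
      (abs_nonneg b₂) hdet hunit]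

lemma abs_l1_add_sub_l1_sub (a b : ℤ × ℤ) (hdet : |det a b| = 1)
    (hunit : ¬(l1 a = 1 ∧ l1 b = 1)) :
    |l1 (a + b) - l1 (a - b)| = 2 * min (l1 a) (l1 b) := by
  rcases le_total 0 (a.1 * b.1) with h | h
  · exact abs_l1_add_sub_l1_sub_of_mul_nonneg h hdet hunit
  · have := abs_l1_add_sub_l1_sub_of_mul_nonneg (a := a) (b := -b) (by simpa using h)
      (by rwa [det_neg_right, abs_neg]) (by rwa [l1_neg])
    rwa [← sub_eq_add_neg, sub_neg_eq_add, abs_sub_comm, l1_neg] at this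

lemma abs_add_eq_one_of_l1_eq_one {a b : ℤ × ℤ} (ha : l1 a = 1) (hb : l1 b = 1)
    (hdet : |det a b| = 1) : |(a + b).1| = 1 ∧ |(a + b).2| = 1 := by
  obtain ⟨a₁, a₂⟩ := a
  obtain ⟨b₁, b₂⟩ := b
  simp only [l1, det, Prod.mk_add_mk] at *
  have ha' : a₁ = 0 ∨ a₂ = 0 := by simp only [abs_eq_max_neg] at ha; omega
  have hb' : b₁ = 0 ∨ b₂ = 0 := by simp only [abs_eq_max_neg] at hb; omega
  rcases ha' with rfl | rfl <;> rcases hb' with rfl | rfl <;> simp_all [abs_mul]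

lemma add_smul_sub_add_smul_sub_mem_convexHull {E : Type*} [AddCommGroup E] [Module ℝ E]
    (P Q R : E) {s t : ℝ} (hs : 0 ≤ s) (ht : 0 ≤ t) (hst : s + t ≤ 1) :
    P + s • (Q - P) + t • (R - P) ∈ convexHull ℝ {P, Q, R} := by
  have hw : ∀ i : Fin 3, 0 ≤ ![1 - s - t, s, t] i := by
    simp only [Fin.forall_fin_succ]; exact ⟨by simp; linarith, hs, ht, nofun⟩
  have hz : ∀ i : Fin 3, ![P, Q, R] i ∈ convexHull ℝ {P, Q, R} := fun i =>
    subset_convexHull ℝ _ (by fin_cases i <;> simp)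
  convert (convex_convexHull ℝ {P, Q, R}).sum_mem (t := Finset.univ) (fun i _ => hw i)
    (by simp [Fin.sum_univ_three]; ring) (fun i _ => hz i) using 1
  simp only [Fin.sum_univ_three, Matrix.cons_val]
  module

lemma latticePt_add (u v : ℤ × ℤ) : latticePt (u + v) = latticePt u + latticePt v := by
  ext i; fin_cases i <;> simp [latticePt]

lemma latticePt_zsmul (n : ℤ) (v : ℤ × ℤ) : latticePt (n • v) = (n : ℝ) • latticePt v := by
  ext i; fin_cases i <;> simp [latticePt]

lemma latticePt_sub_s4 (u v : ℤ × ℤ) : latticePt (u - v) = latticePt u - latticePt v := by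
  ext i; fin_cases i <;> simp [latticePt]

lemma latticePt_add_mem_convexHull {p q r x : ℤ × ℤ} {D t u : ℤ} (hD : 0 < D) (ht : 0 ≤ t)
    (hu : 0 ≤ u) (htu : t + u ≤ D) (hx : D • x = t • (q - p) + u • (r - p)) :
    latticePt (p + x) ∈ convexHull ℝ ({latticePt p, latticePt q, latticePt r} :
      Set (EuclideanSpace ℝ (Fin 2))) := by
  have hD' : (0 : ℝ) < D := by exact_mod_cast hD
  have hxR := congrArg latticePt hx
  simp only [latticePt_add, latticePt_zsmul, latticePt_sub_s4] at hxR
  convert add_smul_sub_add_smul_sub_mem_convexHull (latticePt p) (latticePt q) (latticePt r)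
    (s := t / D) (t := u / D) (by positivity) (by positivity)
    (by rw [← add_div, div_le_one hD']; exact_mod_cast htu) using 1
  rw [latticePt_add, add_assoc, div_eq_inv_mul, div_eq_inv_mul, mul_smul, mul_smul, ← smul_add,
    ← hxR, smul_smul, inv_mul_cancel₀ hD'.ne', one_smul]

def IsEmptyTriangle (p q r : ℤ × ℤ) : Prop :=
  ∀ x : ℤ × ℤ, latticePt x ∈ convexHull ℝ ({latticePt p, latticePt q, latticePt r} :
    Set (EuclideanSpace ℝ (Fin 2))) → x = p ∨ x = q ∨ x = r

namespace IsEmptyTriangle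

variable {p q r : ℤ × ℤ} {D : ℤ}

lemma swap (h : IsEmptyTriangle p q r) : IsEmptyTriangle p r q := fun x hx => by
  rw [Set.pair_comm] at hx
  rcases h x hx with h | h | h <;> tauto

lemma coeffs_eq_of_smul_eq (h : IsEmptyTriangle p q r) (hD : det (q - p) (r - p) = D)
    (hD0 : 0 < D) {x : ℤ × ℤ} {t u : ℤ} (ht : 0 ≤ t) (hu : 0 ≤ u)
    (htu : t + u ≤ D) (hx : D • x = t • (q - p) + u • (r - p)) :
    (t = 0 ∧ u = 0) ∨ (t = D ∧ u = 0) ∨ (t = 0 ∧ u = D) := by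
  subst hD
  obtain ⟨rfl, rfl⟩ := eq_det_of_smul_eq hD0.ne' hx
  rcases h (p + x) (latticePt_add_mem_convexHull hD0 ht hu htu hx) with hx' | hx' | hx'
  · obtain rfl := add_eq_left.mp hx'
    simp [det]
  · obtain rfl := eq_sub_of_add_eq' hx'
    simp [det_self]
  · obtain rfl := eq_sub_of_add_eq' hx'
    simp [det_self]

lemma eq_zero_of_smul_eq (h : IsEmptyTriangle p q r) (hD : det (q - p) (r - p) = D)
    (hD0 : 0 < D) {x : ℤ × ℤ} {t u : ℤ} (ht : 0 ≤ t) (ht' : t < D)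
    (hu : 0 ≤ u) (hu' : u < D) (hx : D • x = t • (q - p) + u • (r - p)) : t = 0 ∧ u = 0 := by
  by_cases htu : t + u ≤ D
  · rcases h.coeffs_eq_of_smul_eq hD hD0 ht hu htu hx with h | h | h <;> omega
  · have hx' : D • ((q - p) + (r - p) - x) = (D - t) • (q - p) + (D - u) • (r - p) := by
      rw [smul_sub, hx, smul_add, sub_smul, sub_smul]; abel
    rcases h.coeffs_eq_of_smul_eq hD hD0 (by omega) (by omega) (by omega) hx' with h | h | h <;>
      omega

lemma dvd_of_smul_eq (h : IsEmptyTriangle p q r) (hD : det (q - p) (r - p) = D)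
    (hD0 : 0 < D) {v : ℤ × ℤ} {α β : ℤ}
    (hv : D • v = α • (q - p) + β • (r - p)) : D ∣ α ∧ D ∣ β := by
  have hx : D • (v - (α / D) • (q - p) - (β / D) • (r - p)) =
      (α % D) • (q - p) + (β % D) • (r - p) := by
    rw [smul_sub, smul_sub, hv, smul_smul, smul_smul, Int.emod_def, Int.emod_def, sub_smul,
      sub_smul]
    abel
  obtain ⟨hα, hβ⟩ := h.eq_zero_of_smul_eq hD hD0 (Int.emod_nonneg α hD0.ne')
    (Int.emod_lt_of_pos α hD0) (Int.emod_nonneg β hD0.ne') (Int.emod_lt_of_pos β hD0) hx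
  exact ⟨Int.dvd_of_emod_eq_zero hα, Int.dvd_of_emod_eq_zero hβ⟩

lemma det_eq_one (h : IsEmptyTriangle p q r) (hD0 : 0 < det (q - p) (r - p)) :
    det (q - p) (r - p) = 1 := by
  set a := q - p
  set b := r - p
  have he₁ : det a b • ((1, 0) : ℤ × ℤ) = b.2 • a + (-a.2) • b := by
    ext <;> simp [det] <;> ring
  have he₂ : det a b • ((0, 1) : ℤ × ℤ) = (-b.1) • a + a.1 • b := by
    ext <;> simp [det] <;> ring
  obtain ⟨hb₂, ha₂⟩ := h.dvd_of_smul_eq rfl hD0 he₁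
  obtain ⟨hb₁, ha₁⟩ := h.dvd_of_smul_eq rfl hD0 he₂
  rw [dvd_neg] at ha₂ hb₁
  have hsq : det a b * det a b ∣ det a b := dvd_sub (mul_dvd_mul ha₁ hb₂) (mul_dvd_mul ha₂ hb₁)
  nlinarith [Int.le_of_dvd hD0 hsq]

lemma abs_det_eq_one (h : IsEmptyTriangle p q r) (hnd : det (q - p) (r - p) ≠ 0) :
    |det (q - p) (r - p)| = 1 := by
  rcases hnd.lt_or_gt with hneg | hpos
  · have := h.swap.det_eq_one (by rw [det_comm]; omega)
    rw [det_comm] at this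
    rw [abs_of_neg hneg]
    omega
  · rw [h.det_eq_one hpos, abs_one]

end IsEmptyTriangle

theorem flip_length_change_general (p q r s : ℤ × ℤ)
    (hpar : p + r = q + s)
    (hnd1 : (q.1 - p.1) * (r.2 - p.2) - (q.2 - p.2) * (r.1 - p.1) ≠ 0)
    (hempty1 : ∀ x : ℤ × ℤ,
      latticePt x ∈ convexHull ℝ ({latticePt p, latticePt q, latticePt r} :
        Set (EuclideanSpace ℝ (Fin 2))) → x = p ∨ x = q ∨ x = r)
    (hnotunit : ¬ (|(r - p).1| = 1 ∧ |(r - p).2| = 1)) :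
    |l1 (s - q) - l1 (r - p)| = 2 * min (l1 (q - p)) (l1 (r - q)) ∧
    (l1 (s - q) ≤ l1 (r - p) →
      l1 (r - p) = l1 (s - q) + 2 * min (l1 (q - p)) (l1 (r - q))) ∧
    (l1 (r - p) ≤ l1 (s - q) →
      l1 (s - q) = l1 (r - p) + 2 * min (l1 (q - p)) (l1 (r - q))) := by
  have hsides : det (q - p) (r - q) = det (q - p) (r - p) := by
    simp only [det, Prod.fst_sub, Prod.snd_sub]; ring
  have hdet : |det (q - p) (r - q)| = 1 := hsides ▸ IsEmptyTriangle.abs_det_eq_one hempty1 hnd1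
  have he : r - p = (q - p) + (r - q) := by abel
  have hf : s - q = -((q - p) - (r - q)) := by
    rw [show s = p + r - q by rw [hpar]; abel]; abel
  have key := abs_l1_add_sub_l1_sub (q - p) (r - q) hdet
    fun ⟨ha, hb⟩ => hnotunit (he ▸ abs_add_eq_one_of_l1_eq_one ha hb hdet)
  rw [hf, l1_neg, he]
  rw [abs_eq_max_neg] at key ⊢
  omega

/-- Flipping an edge changes its `ℓ₁` length by exactly `2ψ`: let the two empty
lattice triangles containing the flippable edge `e = pr` form the parallelogram
`p q r s` (so `p + r = q + s`), let `f = qs` be the other diagonal, and let `ψ`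
be the `ℓ₁` length of the shortest side of the parallelogram.  If `e` is not a
unit diagonal then `| |f|₁ − |e|₁ | = 2ψ`; more precisely, if `e` is the longer
diagonal then `|e|₁ = |f|₁ + 2ψ`, and if `e` is the shorter diagonal then
`|f|₁ = |e|₁ + 2ψ`. -/
theorem flip_length_change (p q r s : ℤ × ℤ)
    (hpar : p + r = q + s)
    (hnd1 : (q.1 - p.1) * (r.2 - p.2) - (q.2 - p.2) * (r.1 - p.1) ≠ 0)
    (hempty1 : ∀ x : ℤ × ℤ,
      latticePt x ∈ convexHull ℝ ({latticePt p, latticePt q, latticePt r} :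
        Set (EuclideanSpace ℝ (Fin 2))) → x = p ∨ x = q ∨ x = r)
    (hempty2 : ∀ x : ℤ × ℤ,
      latticePt x ∈ convexHull ℝ ({latticePt p, latticePt s, latticePt r} :
        Set (EuclideanSpace ℝ (Fin 2))) → x = p ∨ x = s ∨ x = r)
    (hnotunit : ¬ (|(r - p).1| = 1 ∧ |(r - p).2| = 1)) :
    |l1 (s - q) - l1 (r - p)| = 2 * min (l1 (q - p)) (l1 (r - q)) ∧
    (l1 (s - q) ≤ l1 (r - p) →
      l1 (r - p) = l1 (s - q) + 2 * min (l1 (q - p)) (l1 (r - q))) ∧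
    (l1 (r - p) ≤ l1 (s - q) →
      l1 (s - q) = l1 (r - p) + 2 * min (l1 (q - p)) (l1 (r - q))) :=
  flip_length_change_general p q r s hpar hnd1 hempty1 hnotunit
end

section
/- Let (X_t)_{t≥0} be a nonnegative stochastic process adapted to a filtration, let ε ∈ (0,1) and N ≥ 1, and suppose X_t ≥ 1 for all t. Let T be a stopping time such that for all t < T, E[X_{t+1} | F_t] ≤ (1 − ε/N)·X_t. Then E[(1 + ε/N)^T] ≤ X_0. In particular, if X_0 < ∞ then T < ∞ almost surely. -/
/-!
With `a = 1 + ε / N`, the stopped process `Y n = a ^ (n ∧ T) * X (n ∧ T)` has nonincreasing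
expectation: on `{n < T}` the drift condition gives
`E[a ^ (n + 1) X (n + 1)] ≤ a ^ (n + 1) (1 - ε / N) E[X n] ≤ a ^ n E[X n]` because
`(1 + ε / N) (1 - ε / N) ≤ 1`, and on `{T ≤ n}` the process does not move. Hence
`E[Y n] ≤ E[X 0]`. Since `X ≥ 1` we have `a ^ (n ∧ T) ≤ Y n`, and Fatou's lemma as `n → ∞`
bounds `E[a ^ T]`.
-/

open MeasureTheory Filter Topology

section StoppedProcess

variable {Ω : Type*} {m0 : MeasurableSpace Ω} {μ : Measure Ω}

theorem integral_le_of_tendsto_of_integral_le {f : ℕ → Ω → ℝ} {F : Ω → ℝ} {C : ℝ}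
    (hf : ∀ n, Integrable (f n) μ) (hf_nonneg : ∀ n, 0 ≤ᵐ[μ] f n)
    (h_tendsto : ∀ᵐ ω ∂μ, Tendsto (fun n ↦ f n ω) atTop (𝓝 (F ω)))
    (hC : ∀ n, ∫ ω, f n ω ∂μ ≤ C) : ∫ ω, F ω ∂μ ≤ C := by
  have hC0 : 0 ≤ C := (integral_nonneg_of_ae (hf_nonneg 0)).trans (hC 0)
  have hF_nonneg : 0 ≤ᵐ[μ] F := by
    filter_upwards [h_tendsto, ae_all_iff.2 hf_nonneg] with ω hω h0
    exact ge_of_tendsto' hω h0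
  have hF_meas : AEStronglyMeasurable F μ :=
    aestronglyMeasurable_of_tendsto_ae atTop (fun n ↦ (hf n).1) h_tendsto
  have hlint : ∫⁻ ω, ENNReal.ofReal (F ω) ∂μ ≤ ENNReal.ofReal C := calc
    ∫⁻ ω, ENNReal.ofReal (F ω) ∂μ = ∫⁻ ω, liminf (fun n ↦ ENNReal.ofReal (f n ω)) atTop ∂μ :=
      lintegral_congr_ae <| h_tendsto.mono fun ω hω ↦
        ((ENNReal.continuous_ofReal.tendsto _).comp hω).liminf_eq.symm
    _ ≤ liminf (fun n ↦ ∫⁻ ω, ENNReal.ofReal (f n ω) ∂μ) atTop :=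
      lintegral_liminf_le' fun n ↦ (hf n).1.aemeasurable.ennreal_ofReal
    _ ≤ ENNReal.ofReal C := liminf_le_of_frequently_le' <| .of_forall fun n ↦ by
      rw [← ofReal_integral_eq_lintegral_ofReal (hf n) (hf_nonneg n)]
      exact ENNReal.ofReal_le_ofReal (hC n)
  rw [integral_eq_lintegral_of_nonneg_ae hF_nonneg hF_meas]
  exact ENNReal.toReal_le_of_le_ofReal hC0 hlint

theorem setIntegral_le_mul_of_condExp_le {m : MeasurableSpace Ω} (hm : m ≤ m0)
    [SigmaFinite (μ.trim hm)] {f g : Ω → ℝ} {s : Set Ω} {c : ℝ} (hs : MeasurableSet[m] s)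
    (hf : Integrable f μ) (hg : Integrable g μ) (hfg : ∀ᵐ ω ∂μ, ω ∈ s → μ[f|m] ω ≤ c * g ω) :
    ∫ ω in s, f ω ∂μ ≤ c * ∫ ω in s, g ω ∂μ := calc
  ∫ ω in s, f ω ∂μ = ∫ ω in s, μ[f|m] ω ∂μ := (setIntegral_condExp hm hf hs).symm
  _ ≤ ∫ ω in s, c * g ω ∂μ :=
    setIntegral_mono_ae_restrict integrable_condExp.integrableOn (hg.const_mul c).integrableOn
      ((ae_restrict_iff' (hm s hs)).2 hfg)
  _ = c * ∫ ω in s, g ω ∂μ := integral_const_mul c _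

theorem tendsto_stoppedProcess_atTop {ι β : Type*} [LinearOrder ι] [Nonempty ι]
    [TopologicalSpace β] {u : ι → Ω → β} {τ : Ω → WithTop ι} {ω : Ω} {i : ι} (hi : τ ω = i) :
    Tendsto (fun n ↦ stoppedProcess u τ n ω) atTop (𝓝 (u i ω)) :=
  tendsto_atTop_of_eventually_const fun n hn ↦ by
    rw [stoppedProcess_eq_of_ge (hi ▸ WithTop.coe_le_coe.2 hn), hi]
    rfl

theorem integral_stoppedProcess_le_of_setIntegral_succ_le {ℱ : Filtration ℕ m0}
    {Y : ℕ → Ω → ℝ} {τ : Ω → WithTop ℕ} (hτ : IsStoppingTime ℱ τ) (hY : ∀ n, Integrable (Y n) μ)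
    (hstep : ∀ n : ℕ,
      ∫ ω in {ω | n < τ ω}, Y (n + 1) ω ∂μ ≤ ∫ ω in {ω | n < τ ω}, Y n ω ∂μ) (n : ℕ) :
    ∫ ω, stoppedProcess Y τ n ω ∂μ ≤ ∫ ω, Y 0 ω ∂μ := by
  induction n with
  | zero => simp [stoppedProcess_eq_of_le]
  | succ n ih =>
    refine le_trans ?_ ih
    set s := {ω | (n : WithTop ℕ) < τ ω}
    have hs : MeasurableSet s := ℱ.le n _ (hτ.measurableSet_gt n)
    have h_before : ∫ ω in s, stoppedProcess Y τ (n + 1) ω ∂μ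
        ≤ ∫ ω in s, stoppedProcess Y τ n ω ∂μ := calc
      _ = ∫ ω in s, Y (n + 1) ω ∂μ := setIntegral_congr_fun hs fun ω (hω : _ < τ ω) ↦
          stoppedProcess_eq_of_le (Order.add_one_le_of_lt (α := ℕ∞) hω)
      _ ≤ ∫ ω in s, Y n ω ∂μ := hstep n
      _ = ∫ ω in s, stoppedProcess Y τ n ω ∂μ := (setIntegral_congr_fun hs fun ω hω ↦
          stoppedProcess_eq_of_le (i := n) (le_of_lt hω)).symm
    have h_after : ∫ ω in sᶜ, stoppedProcess Y τ (n + 1) ω ∂μ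
        = ∫ ω in sᶜ, stoppedProcess Y τ n ω ∂μ :=
      setIntegral_congr_fun hs.compl fun ω hω ↦ by
        have hω : τ ω ≤ n := not_lt.1 hω
        rw [stoppedProcess_eq_of_ge (i := n) hω,
          stoppedProcess_eq_of_ge (i := n + 1) (hω.trans (by simp))]
    rw [← integral_add_compl hs (integrable_stoppedProcess hτ hY (n + 1)),
      ← integral_add_compl hs (integrable_stoppedProcess hτ hY n), h_after]
    exact add_le_add_left h_before _

theorem integral_stoppedProcess_pow_mul_le {ℱ : Filtration ℕ m0} [SigmaFiniteFiltration μ ℱ]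
    {X : ℕ → Ω → ℝ} {τ : Ω → WithTop ℕ} (hτ : IsStoppingTime ℱ τ) {a r : ℝ} (ha : 0 ≤ a)
    (har : a * r ≤ 1) (hX : ∀ n, Integrable (X n) μ) (hX_nonneg : ∀ n, 0 ≤ᵐ[μ] X n)
    (hdrift : ∀ n : ℕ, ∀ᵐ ω ∂μ, n < τ ω → μ[X (n + 1)|ℱ n] ω ≤ r * X n ω) (n : ℕ) :
    ∫ ω, stoppedProcess (fun k ω ↦ a ^ k * X k ω) τ n ω ∂μ ≤ ∫ ω, X 0 ω ∂μ := by
  refine (integral_stoppedProcess_le_of_setIntegral_succ_le hτ (fun k ↦ (hX k).const_mul _)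
    (fun k ↦ ?_) n).trans_eq (by simp)
  set s := {ω | (k : WithTop ℕ) < τ ω}
  have hXs : 0 ≤ ∫ ω in s, X k ω ∂μ := integral_nonneg_of_ae (ae_restrict_of_ae (hX_nonneg k))
  calc ∫ ω in s, a ^ (k + 1) * X (k + 1) ω ∂μ = a ^ (k + 1) * ∫ ω in s, X (k + 1) ω ∂μ :=
        integral_const_mul _ _
    _ ≤ a ^ (k + 1) * (r * ∫ ω in s, X k ω ∂μ) := by
        gcongr
        exact setIntegral_le_mul_of_condExp_le (ℱ.le k) (hτ.measurableSet_gt k) (hX _) (hX _)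
          (hdrift k)
    _ = a ^ k * (a * r) * ∫ ω in s, X k ω ∂μ := by ring
    _ ≤ a ^ k * ∫ ω in s, X k ω ∂μ := by
        gcongr
        exact mul_le_of_le_one_right (by positivity) har
    _ = ∫ ω in s, a ^ k * X k ω ∂μ := (integral_const_mul _ _).symm

end StoppedProcess

theorem exponential_moment_of_hitting_time_general
    {Ω : Type*} {m0 : MeasurableSpace Ω} {μ : Measure Ω} [IsProbabilityMeasure μ]
    (ℱ : Filtration ℕ m0) (X : ℕ → Ω → ℝ)
    (ε N : ℝ) (hε0 : 0 < ε) (hN : 1 ≤ N)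
    (hint : ∀ t, Integrable (X t) μ)
    (hone : ∀ t, ∀ᵐ ω ∂μ, 1 ≤ X t ω)
    (T : Ω → ℕ) (hT : IsStoppingTime ℱ (fun ω => (T ω : WithTop ℕ)))
    (hcontr : ∀ t, ∀ᵐ ω ∂μ, t < T ω →
      (μ[X (t + 1) | ℱ t]) ω ≤ (1 - ε / N) * X t ω) :
    ∫ ω, (1 + ε / N) ^ T ω ∂μ ≤ ∫ ω, X 0 ω ∂μ := by
  set τ : Ω → WithTop ℕ := fun ω => T ω
  have ha0 : 0 ≤ 1 + ε / N := (add_pos one_pos (div_pos hε0 (one_pos.trans_le hN))).le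
  have har : (1 + ε / N) * (1 - ε / N) ≤ 1 := by nlinarith [sq_nonneg (ε / N)]
  have hX_one : ∀ᵐ ω ∂μ, ∀ k, 1 ≤ X k ω := ae_all_iff.2 hone
  refine integral_le_of_tendsto_of_integral_le
    (f := stoppedProcess (fun k _ ↦ (1 + ε / N) ^ k) τ)
    (fun n ↦ integrable_stoppedProcess hT (fun k ↦ integrable_const _) n)
    (fun n ↦ .of_forall fun ω ↦ pow_nonneg ha0 _)
    (.of_forall fun ω ↦ tendsto_stoppedProcess_atTop rfl) fun n ↦ ?_
  calc ∫ ω, stoppedProcess (fun k _ ↦ (1 + ε / N) ^ k) τ n ω ∂μ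
      ≤ ∫ ω, stoppedProcess (fun k ω ↦ (1 + ε / N) ^ k * X k ω) τ n ω ∂μ :=
        integral_mono_ae (integrable_stoppedProcess hT (fun k ↦ integrable_const _) n)
          (integrable_stoppedProcess hT (fun k ↦ (hint k).const_mul _) n)
          (hX_one.mono fun ω h ↦ le_mul_of_one_le_right (pow_nonneg ha0 _) (h _))
    _ ≤ ∫ ω, X 0 ω ∂μ :=
        integral_stoppedProcess_pow_mul_le hT ha0 har hint
          (fun k ↦ (hone k).mono fun ω h ↦ zero_le_one.trans h)
          (fun k ↦ (hcontr k).mono fun ω h hlt ↦ h (WithTop.coe_lt_coe.1 hlt)) n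

/-- Lyapunov supermartingale bound: if `(X_t)` is an adapted process with `X_t ≥ 1`,
`ε ∈ (0,1)`, `N ≥ 1`, and `T` is a stopping time such that on `{t < T}` one has
`E[X_{t+1} | F_t] ≤ (1 − ε/N)·X_t`, then `E[(1 + ε/N)^T] ≤ E[X_0]`. -/
theorem exponential_moment_of_hitting_time
    {Ω : Type*} {m0 : MeasurableSpace Ω} {μ : Measure Ω} [IsProbabilityMeasure μ]
    (ℱ : Filtration ℕ m0) (X : ℕ → Ω → ℝ)
    (ε N : ℝ) (hε0 : 0 < ε) (hε1 : ε < 1) (hN : 1 ≤ N)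
    (hadapted : Adapted ℱ X)
    (hint : ∀ t, Integrable (X t) μ)
    (hone : ∀ t, ∀ᵐ ω ∂μ, 1 ≤ X t ω)
    (T : Ω → ℕ) (hT : IsStoppingTime ℱ (fun ω => (T ω : WithTop ℕ)))
    (hcontr : ∀ t, ∀ᵐ ω ∂μ, t < T ω →
      (μ[X (t + 1) | ℱ t]) ω ≤ (1 - ε / N) * X t ω) :
    ∫ ω, (1 + ε / N) ^ T ω ∂μ ≤ ∫ ω, X 0 ω ∂μ :=
  exponential_moment_of_hitting_time_general ℱ X ε N hε0 hN hint hone T hT hcontr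
end
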